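/- (Christoffel–Darboux formula.) Let T be a (p,q)-banded matrix with nonvanishing extreme diagonals, with determinantal polynomials Q_{n,N} and R_{n,N}. Then for every N ∈ ℕ and all x, y ∈ ℝ: α_N · β_N · (x − y) · ∑_{n=0}^{N} Q_{n,N}(x) · R_{n,N}(y) = P_{N+1}(x)·P_N(y) − P_N(x)·P_{N+1}(y). -/

import Mathlib

/-!
For fixed `N`, multilinearity of the determinant in its first row makes `n ↦ Q_{n,N}`, like each
`n ↦ A^{(a)}_n`, a left null vector of `X - T`. It vanishes for `N < n < N + p` (a repeated row), equals the Casoratian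
`D_N = det (A^{(a)}_{N+i})` at `n = N`, and equals `(-1)^(p-1) D_{N+1}` at `n = N + p`. Using this
null vector to trade the last row of `X - T^{[N]}` for row `N + p`, which meets the leading block
only in its corner entry `-T_{N+p,N}`, gives `P_{N+1} D_N = (-1)^(p-1) T_{N+p,N} D_{N+1} P_N`, hence
`P_N = α_N D_N` by induction; transposing `T` gives the same for the `B`'s with `β_N`.
Finally, expanding `x Q_{n,N}(x)` and `y R_{n,N}(y)` by the two recursions, all terms of
`(x - y) ∑_{n ≤ N} Q_{n,N}(x) R_{n,N}(y)` cancel except those through the corners `(N + p, N)` and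
`(N, N + q)` of the band, and these are `P_{N+1}(x) P_N(y)` and `P_N(x) P_{N+1}(y)` up to `α_N β_N`.
-/

open Finset Polynomial Matrix

def IsBanded {R : Type*} [Zero R] (p q : ℕ) (T : ℕ → ℕ → R) : Prop :=
  ∀ i j, j + p < i ∨ i + q < j → T i j = 0

namespace IsBanded

variable {R : Type*} {p q : ℕ} {T : ℕ → ℕ → R}

theorem transpose [Zero R] (hT : IsBanded p q T) : IsBanded q p fun i j => T j i :=
  fun i j h => hT j i h.symm

theorem map [Semiring R] {S : Type*} [Semiring S] (hT : IsBanded p q T) (f : R →+* S) :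
    IsBanded p q fun i j => f (T i j) :=
  fun i j h => by simp only [hT i j h, map_zero]

section Semiring

variable [Semiring R]

theorem sum_Icc_eq_sum_range (hT : IsBanded p q T) (f : ℕ → R) {n L : ℕ} (hL : n + p < L) :
    ∑ m ∈ Icc (n - q) (n + p), T m n * f m = ∑ m ∈ range L, T m n * f m := by
  refine sum_subset (fun m hm => ?_) (fun m _ hm => ?_)
  · rw [mem_Icc] at hm
    rw [mem_range]
    omega
  · simp only [mem_Icc, not_and_or, not_le] at hm
    rw [hT m n (by omega), zero_mul]

theorem sum_range_sum_Ico_eq (hT : IsBanded p q T) (hp : 0 < p) {u v : ℕ → R} {N L : ℕ}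
    (hL : N + p < L) (hu : ∀ m, N < m → m < N + p → u m = 0) :
    ∑ n ∈ range (N + 1), ∑ m ∈ Ico (N + 1) L, T m n * u m * v n
      = T (N + p) N * u (N + p) * v N := by
  have hterm : ∀ n ≤ N, ∀ m, N < m → m ≠ N + p ∨ n ≠ N → T m n * u m * v n = 0 := by
    intro n hn m hm hne
    by_cases h : m < N + p
    · rw [hu m hm h, mul_zero, zero_mul]
    · rw [hT m n (by omega), zero_mul, zero_mul]
  rw [sum_eq_single_of_mem N (self_mem_range_succ N) fun n hn hne => ?_,
    sum_eq_single_of_mem (N + p) (mem_Ico.mpr ⟨by omega, hL⟩) fun m hm hne => ?_]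
  · exact hterm N le_rfl m (mem_Ico.mp hm).1 (Or.inl hne)
  · exact sum_eq_zero fun m hm =>
      hterm n (Nat.lt_succ_iff.mp (mem_range.mp hn)) m (mem_Ico.mp hm).1 (Or.inr hne)

end Semiring

theorem sub_mul_sum_mul_eq [CommRing R] (hT : IsBanded p q T) (hp : 0 < p) (hq : 0 < q)
    {u v : ℕ → R} {x y : R} {N : ℕ}
    (hu : ∀ n, ∑ m ∈ Icc (n - q) (n + p), T m n * u m = x * u n)
    (hv : ∀ n, ∑ m ∈ Icc (n - p) (n + q), T n m * v m = y * v n)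
    (hu0 : ∀ m, N < m → m < N + p → u m = 0) (hv0 : ∀ m, N < m → m < N + q → v m = 0) :
    (x - y) * ∑ n ∈ range (N + 1), u n * v n
      = T (N + p) N * u (N + p) * v N - T N (N + q) * u N * v (N + q) := by
  set L := N + p + q + 1
  have hx : x * ∑ n ∈ range (N + 1), u n * v n
      = ∑ n ∈ range (N + 1), ∑ m ∈ range L, T m n * u m * v n := by
    rw [mul_sum]
    refine sum_congr rfl fun n hn => ?_
    rw [← mul_assoc, ← hu n,
      hT.sum_Icc_eq_sum_range _ (L := L) (by rw [mem_range] at hn; omega), sum_mul]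
  have hy : y * ∑ n ∈ range (N + 1), u n * v n
      = ∑ n ∈ range (N + 1), ∑ m ∈ range L, T n m * v m * u n := by
    rw [mul_sum]
    refine sum_congr rfl fun n hn => ?_
    rw [mul_left_comm, mul_comm, ← hv n,
      hT.transpose.sum_Icc_eq_sum_range _ (L := L) (by rw [mem_range] at hn; omega), sum_mul]
  have hsplit (f : ℕ → ℕ → R) : ∑ n ∈ range (N + 1), ∑ m ∈ range L, f m n
      = ∑ n ∈ range (N + 1), ∑ m ∈ range (N + 1), f m n
        + ∑ n ∈ range (N + 1), ∑ m ∈ Ico (N + 1) L, f m n := by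
    rw [← sum_add_distrib]
    exact sum_congr rfl fun n _ => (sum_range_add_sum_Ico _ (by omega)).symm
  rw [sub_mul, hx, hy, hsplit, hsplit, hT.sum_range_sum_Ico_eq hp (by omega) hu0,
    hT.transpose.sum_range_sum_Ico_eq hq (by omega) hv0, sum_comm (s := range (N + 1))]
  simp only [mul_comm, mul_left_comm]
  ring

end IsBanded

theorem Matrix.det_updateRow_sum_smul {S n ι : Type*} [CommRing S] [Fintype n] [DecidableEq n]
    (M : Matrix n n S) (j : n) (s : Finset ι) (c : ι → S) (w : ι → n → S) :
    (M.updateRow j (∑ k ∈ s, c k • w k)).det = ∑ k ∈ s, c k * (M.updateRow j (w k)).det := by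
  induction s using Finset.cons_induction with
  | empty => exact det_eq_zero_of_row_eq_zero j fun a => by simp
  | cons k s hk ih => rw [sum_cons, det_updateRow_add, det_updateRow_smul, ih, sum_cons]

section Casorati

variable {S : Type*} {p : ℕ}

-- With `w n = (A^{(1)}_n, …, A^{(p)}_n)`, the paper's `Q_{n,N}` is
-- `((casoratiMatrix w N).updateRow 0 (w n)).det`.
def casoratiMatrix (w : ℕ → Fin p → S) (N : ℕ) : Matrix (Fin p) (Fin p) S :=
  Matrix.of fun i => w (N + i)

theorem det_casoratiMatrix_zero [CommRing S] {w : ℕ → Fin p → S}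
    (hw0 : ∀ (a : Fin p) (n : ℕ), n < a → w n a = 0) (hw1 : ∀ a : Fin p, w a a = 1) :
    (casoratiMatrix w 0).det = 1 := by
  rw [det_of_isLowerTriangular _ fun i a (h : i < a) => by simpa [casoratiMatrix] using hw0 a i h]
  simp [casoratiMatrix, hw1]

variable [NeZero p]

theorem of_ite_eq_updateRow_casoratiMatrix (w : ℕ → Fin p → S) (n N : ℕ) :
    (Matrix.of fun i a : Fin p => if (i : ℕ) = 0 then w n a else w (N + i) a)
      = (casoratiMatrix w N).updateRow 0 (w n) := by
  ext i a
  rcases eq_or_ne i 0 with rfl | hi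
  · simp
  · simp [hi, casoratiMatrix]

variable [CommRing S] {w : ℕ → Fin p → S}

theorem det_updateRow_casoratiMatrix_self (N : ℕ) :
    ((casoratiMatrix w N).updateRow 0 (w N)).det = (casoratiMatrix w N).det := by
  have hrow : casoratiMatrix w N 0 = w N := by
    ext
    simp [casoratiMatrix]
  rw [← hrow, updateRow_eq_self]

theorem det_updateRow_casoratiMatrix_of_lt {N n : ℕ} (hNn : N < n) (hn : n < N + p) :
    ((casoratiMatrix w N).updateRow 0 (w n)).det = 0 := by
  have hrow : casoratiMatrix w N ⟨n - N, by omega⟩ = w n := by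
    change w (N + (n - N)) = w n
    congr 1
    omega
  rw [← hrow, det_updateRow_eq_zero]
  rw [Ne, Fin.ext_iff, Fin.val_zero, Fin.val_mk]
  omega

theorem det_updateRow_casoratiMatrix_add (N : ℕ) :
    ((casoratiMatrix w N).updateRow 0 (w (N + p))).det
      = (-1) ^ (p - 1) * (casoratiMatrix w (N + 1)).det := by
  have hperm : (casoratiMatrix w N).updateRow 0 (w (N + p))
      = (casoratiMatrix w (N + 1)).submatrix (finRotate p).symm id := by
    obtain ⟨p, rfl⟩ := Nat.exists_eq_add_one_of_ne_zero (NeZero.ne p)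
    ext i a
    obtain ⟨j, rfl⟩ := (finRotate (p + 1)).surjective i
    simp only [submatrix_apply, Equiv.symm_apply_apply, id_eq, casoratiMatrix, updateRow_apply]
    rcases eq_or_ne j (Fin.last p) with rfl | hj
    · simp only [finRotate_last, ↓reduceIte, of_apply, Fin.val_last]
      rw [add_assoc, add_comm 1]
    · have h := coe_finRotate_of_ne_last hj
      have hne : finRotate (p + 1) j ≠ 0 := by
        rw [Ne, Fin.ext_iff, h, Fin.val_zero]
        omega
      simp only [hne, if_false, of_apply, h]
      congr 1
      omega
  rw [hperm, det_permute, Equiv.Perm.sign_symm, sign_finRotate]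
  simp

theorem sum_mul_det_updateRow_casoratiMatrix {c : ℕ → ℕ → S} {s : ℕ → Finset ℕ} {x : S}
    (hw : ∀ n a, ∑ m ∈ s n, c m n * w m a = x * w n a) (N n : ℕ) :
    ∑ m ∈ s n, c m n * ((casoratiMatrix w N).updateRow 0 (w m)).det
      = x * ((casoratiMatrix w N).updateRow 0 (w n)).det := by
  have hrow : ∑ m ∈ s n, c m n • w m = x • w n := by
    ext a
    simpa using hw n a
  rw [← det_updateRow_sum_smul, hrow, det_updateRow_smul]

end Casorati

section LeadingBlock

variable {S : Type*} [CommRing S]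

def leadingBlock (G : ℕ → ℕ → S) (N : ℕ) : Matrix (Fin N) (Fin N) S :=
  Matrix.of fun i j => G i j

theorem det_updateRow_last_leadingBlock (G : ℕ → ℕ → S) (N : ℕ) {r : Fin (N + 1) → S}
    (hr : ∀ j : Fin (N + 1), (j : ℕ) < N → r j = 0) :
    ((leadingBlock G (N + 1)).updateRow (Fin.last N) r).det
      = r (Fin.last N) * (leadingBlock G N).det := by
  rw [det_succ_row _ (Fin.last N), sum_eq_single (Fin.last N)]
  · rw [updateRow_self, submatrix_updateRow_succAbove, Fin.succAbove_last, Fin.val_last,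
      ← two_mul, pow_mul, neg_one_sq, one_pow, one_mul]
    rfl
  · intro j _ hj
    rw [updateRow_self, hr j (Fin.val_lt_last hj), mul_zero, zero_mul]
  · simp

-- Cramer's rule: `u` writes `u (N + p)` times row `N + p` of `G` (cut to the columns `≤ N`) as a
-- combination of the rows of the leading block; put it in place of the last row and expand.
theorem mul_det_leadingBlock_succ (G : ℕ → ℕ → S) {p N : ℕ} (hp : 0 < p)
    (hG : ∀ m n, n + p < m → G m n = 0)
    {u : ℕ → S} (hu : ∀ n ≤ N, ∑ m ∈ range (N + p + 1), u m * G m n = 0)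
    (hu0 : ∀ m, N < m → m < N + p → u m = 0) :
    u N * (leadingBlock G (N + 1)).det = -(u (N + p) * G (N + p) N * (leadingBlock G N).det) := by
  set r : Fin (N + 1) → S := fun j => G (N + p) j
  have hrow : u (N + p) • r = ∑ m : Fin (N + 1), (-u m) • leadingBlock G (N + 1) m := by
    ext j
    have h := hu j (Fin.is_le j)
    rw [sum_range_succ, ← sum_range_add_sum_Ico _ (show N + 1 ≤ N + p by omega),
      sum_eq_zero (s := Ico _ _) fun m hm => by
        rw [mem_Ico] at hm
        rw [hu0 m (by omega) (by omega), zero_mul],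
      add_zero, ← Fin.sum_univ_eq_sum_range (fun m => u m * G m j)] at h
    simp only [Pi.smul_apply, smul_eq_mul, Finset.sum_apply, neg_mul, sum_neg_distrib]
    exact eq_neg_of_add_eq_zero_right h
  have h := det_updateRow_sum (leadingBlock G (N + 1)) (Fin.last N) fun m => -u m
  rw [← hrow, det_updateRow_smul,
    det_updateRow_last_leadingBlock G N fun j hj => hG _ _ (by omega)] at h
  simp only [Fin.val_last, smul_eq_mul] at h
  linear_combination h

end LeadingBlock

section CharacteristicPolynomial

variable {R : Type*} [CommRing R] {p q : ℕ} {T : ℕ → ℕ → R}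

-- The paper's `α_N`; its `β_N` is `extremeDiagonalProd q (fun i j => T j i) N`.
def extremeDiagonalProd (p : ℕ) (T : ℕ → ℕ → R) (N : ℕ) : R :=
  (-1) ^ ((p - 1) * N) * ∏ k ∈ range N, T (k + p) k

theorem extremeDiagonalProd_succ (N : ℕ) :
    extremeDiagonalProd p T (N + 1)
      = (-1) ^ (p - 1) * T (N + p) N * extremeDiagonalProd p T N := by
  rw [extremeDiagonalProd, extremeDiagonalProd, prod_range_succ, mul_add_one, pow_add]
  ring

theorem det_leadingBlock_sub_C (T : ℕ → ℕ → R) (N : ℕ) :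
    (leadingBlock (fun i j => (if i = j then X else 0) - C (T i j)) N).det
      = (leadingBlock T N).charpoly := by
  rw [charpoly]
  congr 1
  ext i j
  simp [leadingBlock, charmatrix_apply, diagonal_apply, Fin.val_inj]

variable [NeZero p] {w : ℕ → Fin p → R[X]}

theorem charpoly_succ_mul_det_casoratiMatrix (hT : IsBanded p q T)
    (hw : ∀ n a, ∑ m ∈ Icc (n - q) (n + p), C (T m n) * w m a = X * w n a) (N : ℕ) :
    (leadingBlock T (N + 1)).charpoly * (casoratiMatrix w N).det
      = (-1) ^ (p - 1) * C (T (N + p) N) * (casoratiMatrix w (N + 1)).det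
        * (leadingBlock T N).charpoly := by
  have hp : 0 < p := Nat.pos_of_neZero p
  set G : ℕ → ℕ → R[X] := fun i j => (if i = j then X else 0) - C (T i j)
  set u : ℕ → R[X] := fun m => ((casoratiMatrix w N).updateRow 0 (w m)).det
  have hu : ∀ n ≤ N, ∑ m ∈ range (N + p + 1), u m * G m n = 0 := by
    intro n hn
    calc ∑ m ∈ range (N + p + 1), u m * G m n
        = u n * X - ∑ m ∈ range (N + p + 1), C (T m n) * u m := by
          simp only [G, mul_sub, mul_ite, mul_zero, sum_sub_distrib, sum_ite_eq', mem_range,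
            if_pos (show n < N + p + 1 by omega), mul_comm (u _) (C _)]
      _ = 0 := by
          rw [← (hT.map C).sum_Icc_eq_sum_range u (by omega),
            sum_mul_det_updateRow_casoratiMatrix hw, mul_comm, sub_self]
  have h := mul_det_leadingBlock_succ G hp
    (fun m n h => by simp [G, hT m n (Or.inl h), show m ≠ n by omega]) hu
    fun m => det_updateRow_casoratiMatrix_of_lt
  simp only [u, G, det_updateRow_casoratiMatrix_self, det_updateRow_casoratiMatrix_add,
    det_leadingBlock_sub_C, show N + p ≠ N by omega, if_false] at h
  linear_combination h

theorem charpoly_leadingBlock_eq [IsDomain R] (hT : IsBanded p q T)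
    (hw0 : ∀ (a : Fin p) (n : ℕ), n < a → w n a = 0) (hw1 : ∀ a : Fin p, w a a = 1)
    (hw : ∀ n a, ∑ m ∈ Icc (n - q) (n + p), C (T m n) * w m a = X * w n a) :
    ∀ N, (leadingBlock T N).charpoly = C (extremeDiagonalProd p T N) * (casoratiMatrix w N).det
  | 0 => by simp [det_casoratiMatrix_zero hw0 hw1, charpoly_isEmpty, extremeDiagonalProd]
  | N + 1 => by
    have ih := charpoly_leadingBlock_eq hT hw0 hw1 hw N
    have hD : (casoratiMatrix w N).det ≠ 0 :=
      right_ne_zero_of_mul (ih ▸ (charpoly_monic _).ne_zero)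
    refine mul_right_cancel₀ hD ?_
    rw [charpoly_succ_mul_det_casoratiMatrix hT hw, ih, extremeDiagonalProd_succ]
    simp only [map_mul, map_pow, map_neg, map_one]
    ring

theorem charpoly_leadingBlock_succ_eq [IsDomain R] (hT : IsBanded p q T)
    (hw0 : ∀ (a : Fin p) (n : ℕ), n < a → w n a = 0) (hw1 : ∀ a : Fin p, w a a = 1)
    (hw : ∀ n a, ∑ m ∈ Icc (n - q) (n + p), C (T m n) * w m a = X * w n a) (N : ℕ) :
    (leadingBlock T (N + 1)).charpoly
      = C (extremeDiagonalProd p T N * T (N + p) N)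
        * ((casoratiMatrix w N).updateRow 0 (w (N + p))).det := by
  rw [charpoly_leadingBlock_eq hT hw0 hw1 hw, det_updateRow_casoratiMatrix_add,
    extremeDiagonalProd_succ]
  simp only [map_mul, map_pow, map_neg, map_one]
  ring

end CharacteristicPolynomial

theorem IsBanded.christoffel_darboux {R : Type*} [CommRing R] [IsDomain R] {p q : ℕ} [NeZero p]
    [NeZero q] {T : ℕ → ℕ → R} (hT : IsBanded p q T) {v : ℕ → Fin p → R[X]}
    (hv0 : ∀ (a : Fin p) (n : ℕ), n < a → v n a = 0) (hv1 : ∀ a : Fin p, v a a = 1)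
    (hv : ∀ n a, ∑ m ∈ Icc (n - q) (n + p), C (T m n) * v m a = X * v n a)
    {w : ℕ → Fin q → R[X]}
    (hw0 : ∀ (b : Fin q) (n : ℕ), n < b → w n b = 0) (hw1 : ∀ b : Fin q, w b b = 1)
    (hw : ∀ n b, ∑ m ∈ Icc (n - p) (n + q), C (T n m) * w m b = X * w n b) (N : ℕ) (x y : R) :
    extremeDiagonalProd p T N * extremeDiagonalProd q (fun i j => T j i) N * (x - y)
        * ∑ n ∈ range (N + 1), ((casoratiMatrix v N).updateRow 0 (v n)).det.eval x
          * ((casoratiMatrix w N).updateRow 0 (w n)).det.eval y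
      = (leadingBlock T (N + 1)).charpoly.eval x * (leadingBlock T N).charpoly.eval y
        - (leadingBlock T N).charpoly.eval x * (leadingBlock T (N + 1)).charpoly.eval y := by
  have hPT (M : ℕ) : (leadingBlock T M).charpoly.eval y
      = (leadingBlock (fun i j => T j i) M).charpoly.eval y := by
    rw [← charpoly_transpose]
    rfl
  have hvx (n : ℕ) : ∑ m ∈ Icc (n - q) (n + p),
        T m n * ((casoratiMatrix v N).updateRow 0 (v m)).det.eval x
      = x * ((casoratiMatrix v N).updateRow 0 (v n)).det.eval x := by
    simpa only [eval_finsetSum, eval_mul, eval_C, eval_X]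
      using congrArg (eval x) (sum_mul_det_updateRow_casoratiMatrix hv N n)
  have hwy (n : ℕ) : ∑ m ∈ Icc (n - p) (n + q),
        T n m * ((casoratiMatrix w N).updateRow 0 (w m)).det.eval y
      = y * ((casoratiMatrix w N).updateRow 0 (w n)).det.eval y := by
    simpa only [eval_finsetSum, eval_mul, eval_C, eval_X]
      using congrArg (eval y) (sum_mul_det_updateRow_casoratiMatrix hw N n)
  rw [mul_assoc, hT.sub_mul_sum_mul_eq (Nat.pos_of_neZero p) (Nat.pos_of_neZero q) hvx hwy
      (fun m h1 h2 => by rw [det_updateRow_casoratiMatrix_of_lt h1 h2, eval_zero])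
      (fun m h1 h2 => by rw [det_updateRow_casoratiMatrix_of_lt h1 h2, eval_zero]),
    hPT, hPT, charpoly_leadingBlock_succ_eq hT hv0 hv1 hv, charpoly_leadingBlock_eq hT hv0 hv1 hv,
    charpoly_leadingBlock_succ_eq hT.transpose hw0 hw1 hw,
    charpoly_leadingBlock_eq hT.transpose hw0 hw1 hw,
    ← det_updateRow_casoratiMatrix_self, ← det_updateRow_casoratiMatrix_self]
  simp only [eval_mul, eval_C]
  ring

/-- Christoffel–Darboux formula for the determinantal polynomials of a `(p,q)`-banded
matrix with nonvanishing extreme diagonals: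
`α_N β_N (x−y) ∑_{n=0}^{N} Q_{n,N}(x) R_{n,N}(y) = P_{N+1}(x)P_N(y) − P_N(x)P_{N+1}(y)`. -/
theorem christoffel_darboux
    (p q : ℕ) (hp : 1 ≤ p) (hq : 1 ≤ q)
    (T : ℕ → ℕ → ℝ)
    (hband : ∀ i j, (j + p < i ∨ i + q < j) → T i j = 0)
    (A : ℕ → ℕ → Polynomial ℝ)
    (hA0 : ∀ a, 1 ≤ a → a ≤ p → ∀ n, n < a - 1 → A a n = 0)
    (hA1 : ∀ a, 1 ≤ a → a ≤ p → A a (a - 1) = 1)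
    (hArec : ∀ a, 1 ≤ a → a ≤ p → ∀ n,
      ∑ m ∈ Finset.Icc (n - q) (n + p), A a m * Polynomial.C (T m n)
        = Polynomial.X * A a n)
    (B : ℕ → ℕ → Polynomial ℝ)
    (hB0 : ∀ b, 1 ≤ b → b ≤ q → ∀ n, n < b - 1 → B b n = 0)
    (hB1 : ∀ b, 1 ≤ b → b ≤ q → B b (b - 1) = 1)
    (hBrec : ∀ b, 1 ≤ b → b ≤ q → ∀ n,
      ∑ m ∈ Finset.Icc (n - p) (n + q), Polynomial.C (T n m) * B b m
        = Polynomial.X * B b n)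
    (P : ℕ → Polynomial ℝ)
    (hP0 : P 0 = 1)
    (hPsucc : ∀ N, P (N + 1) = (Matrix.of fun i j : Fin (N + 1) => T i j).charpoly)
    (α : ℕ → ℝ)
    (hα : ∀ N, α N = (-1 : ℝ) ^ ((p - 1) * N) * ∏ k ∈ Finset.range N, T (k + p) k)
    (β : ℕ → ℝ)
    (hβ : ∀ N, β N = (-1 : ℝ) ^ ((q - 1) * N) * ∏ k ∈ Finset.range N, T k (k + q))
    (Q : ℕ → ℕ → Polynomial ℝ)
    (hQ : ∀ n N, Q n N = (Matrix.of fun i a : Fin p =>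
        if (i : ℕ) = 0 then A ((a : ℕ) + 1) n else A ((a : ℕ) + 1) (N + (i : ℕ))).det)
    (R : ℕ → ℕ → Polynomial ℝ)
    (hR : ∀ n N, R n N = (Matrix.of fun i b : Fin q =>
        if (i : ℕ) = 0 then B ((b : ℕ) + 1) n else B ((b : ℕ) + 1) (N + (i : ℕ))).det) :
    ∀ (N : ℕ) (x y : ℝ),
      α N * β N * (x - y) * ∑ n ∈ Finset.range (N + 1), (Q n N).eval x * (R n N).eval y
        = (P (N + 1)).eval x * (P N).eval y - (P N).eval x * (P (N + 1)).eval y := by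
  intro N x y
  have : NeZero p := ⟨by omega⟩
  have : NeZero q := ⟨by omega⟩
  have hP (M : ℕ) : P M = (leadingBlock T M).charpoly := by
    cases M
    · simp [hP0, charpoly_isEmpty]
    · exact hPsucc _
  have hQ' (n : ℕ) : Q n N = ((casoratiMatrix (fun m (a : Fin p) => A (a + 1) m) N).updateRow 0
      fun a => A (a + 1) n).det := by
    rw [hQ, ← of_ite_eq_updateRow_casoratiMatrix]
  have hR' (n : ℕ) : R n N = ((casoratiMatrix (fun m (b : Fin q) => B (b + 1) m) N).updateRow 0
      fun b => B (b + 1) n).det := by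
    rw [hR, ← of_ite_eq_updateRow_casoratiMatrix]
  rw [hα, hβ, hP, hP]
  simp only [hQ', hR']
  refine IsBanded.christoffel_darboux hband
    (fun a n h => hA0 _ (by omega) (by omega) n (by omega))
    (fun a => hA1 (a + 1) (by omega) (by omega)) (fun n a => ?_)
    (fun b n h => hB0 _ (by omega) (by omega) n (by omega))
    (fun b => hB1 (b + 1) (by omega) (by omega)) (fun n b => hBrec (b + 1) (by omega) (by omega) n)
    N x y
  rw [← hArec (a + 1) (by omega) (by omega) n]
  exact sum_congr rfl fun _ _ => mul_comm _ _
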